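/- If A ∈ ℂ^{n×n}, n ≥ 2, is a Nekrasov matrix, then A is nonsingular and ‖A⁻¹‖_∞ ≤ (max_i z_i(A)/|a_ii|) / (1 − max_i h_i(A)/|a_ii|), where z_1(A) = 1 and z_i(A) = Σ_{j<i} (|a_ij|/|a_jj|) z_j(A) + 1. -/
import Mathlib


open Matrix

attribute [local instance] Matrix.linftyOpNormedAddCommGroup

/-- Deleted i-th row sum r_i(A). -/
noncomputable def rowSum {n : ℕ} (A : Matrix (Fin n) (Fin n) ℂ) (i : Fin n) : ℝ :=
  ∑ j ∈ Finset.univ.erase i, ‖A i j‖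

/-- Recursive Nekrasov quantities h_i(A). -/
noncomputable def nekH {n : ℕ} (A : Matrix (Fin n) (Fin n) ℂ) : Fin n → ℝ :=
  fun i =>
    (∑ j : {j : Fin n // j < i}, ‖A i j.1‖ * nekH A j.1 / ‖A j.1 j.1‖) +
      ∑ j ∈ Finset.univ.filter (fun j => i < j), ‖A i j‖
  termination_by i => (i : ℕ)
  decreasing_by exact j.2

/-- Recursive quantities z_i(A). -/
noncomputable def nekZ {n : ℕ} (A : Matrix (Fin n) (Fin n) ℂ) : Fin n → ℝ :=
  fun i => (∑ j : {j : Fin n // j < i}, ‖A i j.1‖ / ‖A j.1 j.1‖ * nekZ A j.1) + 1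
  termination_by i => (i : ℕ)
  decreasing_by exact j.2

/-- |D| : entrywise absolute value of the diagonal part. -/
noncomputable def absD {n : ℕ} (A : Matrix (Fin n) (Fin n) ℂ) : Matrix (Fin n) (Fin n) ℝ :=
  Matrix.of fun i j => if i = j then ‖A i j‖ else 0

/-- |L| : entrywise absolute value of the strictly lower triangular part. -/
noncomputable def absL {n : ℕ} (A : Matrix (Fin n) (Fin n) ℂ) : Matrix (Fin n) (Fin n) ℝ :=
  Matrix.of fun i j => if j < i then ‖A i j‖ else 0

/-- |U| : entrywise absolute value of the strictly upper triangular part. -/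
noncomputable def absU {n : ℕ} (A : Matrix (Fin n) (Fin n) ℂ) : Matrix (Fin n) (Fin n) ℝ :=
  Matrix.of fun i j => if i < j then ‖A i j‖ else 0

/-- Comparison matrix ⟨A⟩. -/
noncomputable def cmpM {n : ℕ} (A : Matrix (Fin n) (Fin n) ℂ) : Matrix (Fin n) (Fin n) ℝ :=
  Matrix.of fun i j => if i = j then ‖A i j‖ else -‖A i j‖

/-- Strong induction on `Fin n`. -/
lemma finStrongInd {n : ℕ} {P : Fin n → Prop}
    (h : ∀ i : Fin n, (∀ j, j < i → P j) → P i) : ∀ i, P i := by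
  have key : ∀ k : ℕ, ∀ i : Fin n, (i : ℕ) < k → P i := by
    intro k
    induction k with
    | zero => intro i hi; exact absurd hi (Nat.not_lt_zero _)
    | succ k IH => intro i _; exact h i fun j hj => IH j (by omega)
  exact fun i => key (n) i i.2

lemma nekH_eq {n : ℕ} (A : Matrix (Fin n) (Fin n) ℂ) (i : Fin n) :
    nekH A i = (∑ j ∈ Finset.univ.filter (fun j => j < i), ‖A i j‖ * nekH A j / ‖A j j‖) +
      ∑ j ∈ Finset.univ.filter (fun j => i < j), ‖A i j‖ := by
  rw [nekH]
  congr 1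
  exact (Finset.sum_subtype (Finset.univ.filter (fun j => j < i)) (by simp)
    (fun j => ‖A i j‖ * nekH A j / ‖A j j‖)).symm

lemma nekZ_eq {n : ℕ} (A : Matrix (Fin n) (Fin n) ℂ) (i : Fin n) :
    nekZ A i = (∑ j ∈ Finset.univ.filter (fun j => j < i), ‖A i j‖ / ‖A j j‖ * nekZ A j) + 1 := by
  rw [nekZ]
  congr 1
  exact (Finset.sum_subtype (Finset.univ.filter (fun j => j < i)) (by simp)
    (fun j => ‖A i j‖ / ‖A j j‖ * nekZ A j)).symm

lemma nekH_nonneg {n : ℕ} (A : Matrix (Fin n) (Fin n) ℂ) : ∀ i, 0 ≤ nekH A i := by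
  refine finStrongInd fun i IH => ?_
  rw [nekH_eq]
  refine add_nonneg (Finset.sum_nonneg fun j hj => ?_) (Finset.sum_nonneg fun j _ => norm_nonneg _)
  have hji : j < i := (Finset.mem_filter.mp hj).2
  exact div_nonneg (mul_nonneg (norm_nonneg _) (IH j hji)) (norm_nonneg _)

lemma nekZ_nonneg {n : ℕ} (A : Matrix (Fin n) (Fin n) ℂ) : ∀ i, 0 ≤ nekZ A i := by
  refine finStrongInd fun i IH => ?_
  rw [nekZ_eq]
  refine add_nonneg (Finset.sum_nonneg fun j hj => ?_) zero_le_one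
  have hji : j < i := (Finset.mem_filter.mp hj).2
  exact mul_nonneg (div_nonneg (norm_nonneg _) (norm_nonneg _)) (IH j hji)

lemma sum_erase_split {n : ℕ} (i : Fin n) (g : Fin n → ℝ) :
    ∑ j ∈ Finset.univ.erase i, g j = ∑ j ∈ Finset.univ.filter (fun j => j < i), g j
      + ∑ j ∈ Finset.univ.filter (fun j => i < j), g j := by
  rw [← Finset.sum_filter_add_sum_filter_not (Finset.univ.erase i) (fun j => j < i)]
  congr 1 <;> apply Finset.sum_congr _ (fun _ _ => rfl) <;> ext j <;>
    simp only [Finset.mem_filter, Finset.mem_erase, Finset.mem_univ, true_and, and_true,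
      Fin.lt_iff_val_lt_val, ne_eq, Fin.ext_iff, not_lt, and_comm] <;> omega

/-- Key pointwise estimate. -/
lemma nek_key {n : ℕ} (A : Matrix (Fin n) (Fin n) ℂ) (hd : ∀ j, 0 < ‖A j j‖)
    (x : Fin n → ℂ) (β M : ℝ) (hβ : ∀ j, ‖(A *ᵥ x) j‖ ≤ β) (hM : ∀ j, ‖x j‖ ≤ M)
    (hM0 : 0 ≤ M) :
    ∀ i, ‖x i‖ ≤ β * (nekZ A i / ‖A i i‖) + M * (nekH A i / ‖A i i‖) := by
  refine finStrongInd fun i IH => ?_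
  have e1 : A i i * x i = (A *ᵥ x) i - ∑ j ∈ Finset.univ.erase i, A i j * x j := by
    show A i i * x i = (fun j => A i j) ⬝ᵥ x - _
    rw [dotProduct, ← Finset.add_sum_erase _ _ (Finset.mem_univ i)]
    ring
  have hstep : ‖A i i‖ * ‖x i‖ ≤ β
      + (∑ j ∈ Finset.univ.filter (fun j => j < i), ‖A i j‖ * ‖x j‖
        + ∑ j ∈ Finset.univ.filter (fun j => i < j), ‖A i j‖ * ‖x j‖) := by
    calc ‖A i i‖ * ‖x i‖ = ‖A i i * x i‖ := (norm_mul _ _).symm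
      _ ≤ ‖(A *ᵥ x) i‖ + ‖∑ j ∈ Finset.univ.erase i, A i j * x j‖ := by
          rw [e1]; exact norm_sub_le _ _
      _ ≤ β + ∑ j ∈ Finset.univ.erase i, ‖A i j‖ * ‖x j‖ := by
          refine add_le_add (hβ i) ((norm_sum_le _ _).trans (le_of_eq ?_))
          exact Finset.sum_congr rfl fun j _ => norm_mul _ _
      _ = _ := by rw [sum_erase_split]
  have hlt : ∑ j ∈ Finset.univ.filter (fun j => j < i), ‖A i j‖ * ‖x j‖
      ≤ ∑ j ∈ Finset.univ.filter (fun j => j < i),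
          (β * (‖A i j‖ / ‖A j j‖ * nekZ A j) + M * (‖A i j‖ * nekH A j / ‖A j j‖)) := by
    refine Finset.sum_le_sum fun j hj => ?_
    have hji : j < i := (Finset.mem_filter.mp hj).2
    have := mul_le_mul_of_nonneg_left (IH j hji) (norm_nonneg (A i j))
    calc ‖A i j‖ * ‖x j‖
        ≤ ‖A i j‖ * (β * (nekZ A j / ‖A j j‖) + M * (nekH A j / ‖A j j‖)) := this
      _ = β * (‖A i j‖ / ‖A j j‖ * nekZ A j) + M * (‖A i j‖ * nekH A j / ‖A j j‖) := by ring
  have hgt : ∑ j ∈ Finset.univ.filter (fun j => i < j), ‖A i j‖ * ‖x j‖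
      ≤ ∑ j ∈ Finset.univ.filter (fun j => i < j), M * ‖A i j‖ := by
    refine Finset.sum_le_sum fun j _ => ?_
    calc ‖A i j‖ * ‖x j‖ ≤ ‖A i j‖ * M :=
          mul_le_mul_of_nonneg_left (hM j) (norm_nonneg _)
      _ = M * ‖A i j‖ := mul_comm _ _
  have hfinal : ‖A i i‖ * ‖x i‖ ≤ β * nekZ A i + M * nekH A i := by
    have hid : β * nekZ A i + M * nekH A i
        = β + ((∑ j ∈ Finset.univ.filter (fun j => j < i),
            (β * (‖A i j‖ / ‖A j j‖ * nekZ A j) + M * (‖A i j‖ * nekH A j / ‖A j j‖)))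
          + ∑ j ∈ Finset.univ.filter (fun j => i < j), M * ‖A i j‖) := by
      rw [nekZ_eq, nekH_eq, Finset.sum_add_distrib, ← Finset.mul_sum, ← Finset.mul_sum,
        ← Finset.mul_sum]
      ring
    rw [hid]
    have := add_le_add hlt hgt
    linarith
  have hdiv : β * (nekZ A i / ‖A i i‖) + M * (nekH A i / ‖A i i‖)
      = (β * nekZ A i + M * nekH A i) / ‖A i i‖ := by ring
  rw [hdiv, le_div_iff₀ (hd i)]
  calc ‖x i‖ * ‖A i i‖ = ‖A i i‖ * ‖x i‖ := mul_comm _ _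
    _ ≤ _ := hfinal

/-- First bound: a Nekrasov matrix A is nonsingular and
    ‖A⁻¹‖_∞ ≤ (max_i z_i(A)/|a_ii|) / (1 − max_i h_i(A)/|a_ii|). -/
theorem stmt10 {n : ℕ} (hn : 2 ≤ n) (A : Matrix (Fin n) (Fin n) ℂ)
    (hNek : ∀ i, nekH A i < ‖A i i‖) :
    IsUnit A ∧
    ‖A⁻¹‖ ≤ (⨆ i, nekZ A i / ‖A i i‖) / (1 - ⨆ i, nekH A i / ‖A i i‖) := by
  have hpos : 0 < n := by omega
  have : NeZero n := ⟨by omega⟩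
  have hd : ∀ i, 0 < ‖A i i‖ := fun i => lt_of_le_of_lt (nekH_nonneg A i) (hNek i)
  set Z : ℝ := ⨆ i, nekZ A i / ‖A i i‖ with hZdef
  set θ : ℝ := ⨆ i, nekH A i / ‖A i i‖ with hθdef
  have hZle : ∀ i, nekZ A i / ‖A i i‖ ≤ Z := fun i =>
    le_ciSup (f := fun i => nekZ A i / ‖A i i‖) (Set.Finite.bddAbove (Set.finite_range _)) i
  have hθle : ∀ i, nekH A i / ‖A i i‖ ≤ θ := fun i =>
    le_ciSup (f := fun i => nekH A i / ‖A i i‖) (Set.Finite.bddAbove (Set.finite_range _)) i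
  have hZ0 : 0 ≤ Z :=
    le_trans (div_nonneg (nekZ_nonneg A 0) (norm_nonneg _)) (hZle 0)
  have hθ0 : 0 ≤ θ :=
    le_trans (div_nonneg (nekH_nonneg A 0) (norm_nonneg _)) (hθle 0)
  have hθ1 : θ < 1 := by
    obtain ⟨i0, hi0⟩ := Finite.exists_max (fun i => nekH A i / ‖A i i‖)
    exact lt_of_le_of_lt (ciSup_le hi0) ((div_lt_one (hd i0)).2 (hNek i0))
  have h1θ : 0 < 1 - θ := by linarith
  -- main bound for any vector
  have bound : ∀ x : Fin n → ℂ, ‖x‖ ≤ Z / (1 - θ) * ‖A *ᵥ x‖ := by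
    intro x
    set β := ‖A *ᵥ x‖ with hβdef
    set M := ‖x‖ with hMdef
    have hβ0 : (0:ℝ) ≤ β := norm_nonneg _
    have hM0 : (0:ℝ) ≤ M := norm_nonneg _
    have key := nek_key A hd x β M (fun j => norm_le_pi_norm (A *ᵥ x) j)
      (fun j => norm_le_pi_norm x j) hM0
    have hMle : M ≤ β * Z + M * θ := by
      have hc : (0:ℝ) ≤ β * Z + M * θ := by positivity
      refine (pi_norm_le_iff_of_nonneg hc).2 fun i => ?_
      exact (key i).trans (add_le_add (mul_le_mul_of_nonneg_left (hZle i) hβ0)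
        (mul_le_mul_of_nonneg_left (hθle i) hM0))
    rw [div_mul_eq_mul_div, le_div_iff₀ h1θ]
    nlinarith
  -- injectivity
  have hinj : Function.Injective (A.mulVec) := by
    intro x y hxy
    have hz : A *ᵥ (x - y) = 0 := by rw [mulVec_sub, hxy, sub_self]
    have := bound (x - y)
    rw [hz, norm_zero, mul_zero] at this
    have := norm_le_zero_iff.mp this
    exact sub_eq_zero.mp this
  have hU : IsUnit A := mulVec_injective_iff_isUnit.mp hinj
  refine ⟨hU, ?_⟩
  rw [linfty_opNorm_eq_opNorm]
  refine ContinuousLinearMap.opNorm_le_bound _ (div_nonneg hZ0 h1θ.le) fun y => ?_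
  show ‖A⁻¹ *ᵥ y‖ ≤ Z / (1 - θ) * ‖y‖
  calc ‖A⁻¹ *ᵥ y‖ ≤ Z / (1 - θ) * ‖A *ᵥ (A⁻¹ *ᵥ y)‖ := bound _
    _ = Z / (1 - θ) * ‖y‖ := by
        rw [mulVec_mulVec, mul_nonsing_inv A ((isUnit_iff_isUnit_det A).mp hU), one_mulVec]
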